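/- (Exact MSE of the BLUP.) In the Fay–Herriot model, for known A > 0 the best linear unbiased predictor θ̂_i^{BLUP}(A) = (1 − B_i)·y_i + B_i·x_iᵀβ̂(A), where B_i = D_i/(A+D_i) and β̂(A) = (XᵀV(A)⁻¹X)⁻¹XᵀV(A)⁻¹y, satisfies E[(θ̂_i^{BLUP}(A) − θ_i)²] = g_{1i}(A) + g_{2i}(A), where g_{1i}(A) = A·D_i/(A+D_i) and g_{2i}(A) = (D_i/(A+D_i))² · x_iᵀ(XᵀV(A)⁻¹X)⁻¹x_i. -/

import Mathlib

/-!
Put `M = (XᵀV⁻¹X)⁻¹XᵀV⁻¹`, so that `β̂ = M y` and `M X = 1`, and `c = xᵢᵀM`. Since `cᵀX = xᵢᵀ`,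
the fixed effect cancels and the prediction error `θ̂ᵢ - θᵢ` is the linear form
`∑ⱼ (B cⱼ - δᵢⱼ B) vⱼ + (B cⱼ + δᵢⱼ (1 - B)) eⱼ` in the independent centred Gaussians `v, e`;
its second moment is the sum of the squared weights times the variances. At `j = i` the cross
terms cancel because `B A = (1 - B) Dᵢ`, which leaves `B A = g₁ᵢ` plus `B² cᵀVc`, and
`cᵀVc = xᵢᵀ M V Mᵀ xᵢ = xᵢᵀ(XᵀV⁻¹X)⁻¹xᵢ`. The matrix `XᵀV⁻¹X` is invertible because it is
positive definite: `V` is, and `X` has full column rank.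
-/

open Matrix MeasureTheory ProbabilityTheory
open scoped NNReal

namespace Matrix

section GLS

variable {R : Type*} [CommRing R] {m n : Type*} [Fintype m] [Fintype n] [DecidableEq m]
  [DecidableEq n] (X : Matrix m n R) (V : Matrix m m R)

noncomputable def glsMatrix : Matrix n m R := (Xᵀ * V⁻¹ * X)⁻¹ * Xᵀ * V⁻¹

variable {X V}

lemma glsMatrix_mul_self (hG : IsUnit (Xᵀ * V⁻¹ * X).det) : glsMatrix X V * X = 1 := by
  rw [glsMatrix, Matrix.mul_assoc, Matrix.mul_assoc, ← Matrix.mul_assoc Xᵀ,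
    nonsing_inv_mul _ hG]

lemma glsMatrix_mul_mul_transpose (hVsymm : Vᵀ = V) (hV : IsUnit V.det)
    (hG : IsUnit (Xᵀ * V⁻¹ * X).det) :
    glsMatrix X V * V * (glsMatrix X V)ᵀ = (Xᵀ * V⁻¹ * X)⁻¹ := by
  have hVinv : (V⁻¹)ᵀ = V⁻¹ := by rw [transpose_nonsing_inv, hVsymm]
  have hGinv : ((Xᵀ * V⁻¹ * X)⁻¹)ᵀ = (Xᵀ * V⁻¹ * X)⁻¹ := by
    rw [transpose_nonsing_inv, transpose_mul, transpose_mul, transpose_transpose, hVinv,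
      Matrix.mul_assoc]
  have hMt : (glsMatrix X V)ᵀ = V⁻¹ * (X * (Xᵀ * V⁻¹ * X)⁻¹) := by
    rw [glsMatrix, transpose_mul, transpose_mul, hVinv, transpose_transpose, hGinv]
  rw [hMt, Matrix.mul_assoc, ← Matrix.mul_assoc V, mul_nonsing_inv _ hV, Matrix.one_mul,
    ← Matrix.mul_assoc, glsMatrix_mul_self hG, Matrix.one_mul]

lemma vecMul_glsMatrix_dotProduct_mulVec (hVsymm : Vᵀ = V) (hV : IsUnit V.det)
    (hG : IsUnit (Xᵀ * V⁻¹ * X).det) (x : n → R) :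
    vecMul x (glsMatrix X V) ⬝ᵥ (V *ᵥ vecMul x (glsMatrix X V)) =
      x ⬝ᵥ ((Xᵀ * V⁻¹ * X)⁻¹ *ᵥ x) := by
  rw [← glsMatrix_mul_mul_transpose hVsymm hV hG, ← mulVec_mulVec, ← mulVec_mulVec,
    mulVec_transpose]
  exact (dotProduct_mulVec _ _ _).symm

end GLS

lemma dotProduct_diagonal_mulVec_self {R : Type*} [CommSemiring R] {m : Type*} [Fintype m]
    [DecidableEq m] (d c : m → R) : c ⬝ᵥ (diagonal d *ᵥ c) = ∑ j, d j * c j ^ 2 := by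
  simp only [dotProduct, mulVec_diagonal]
  exact Finset.sum_congr rfl fun j _ => by ring

lemma mulVec_injective_of_rank_eq_card {K : Type*} [Field K] {m n : Type*} [Fintype n]
    {X : Matrix m n K} (hX : X.rank = Fintype.card n) : Function.Injective X.mulVec := by
  have hker := X.mulVecLin.finrank_range_add_finrank_ker
  rw [Module.finrank_fintype_fun_eq_card, ← rank, hX, add_eq_left,
    Submodule.finrank_eq_zero] at hker
  exact LinearMap.ker_eq_bot.mp hker

lemma isUnit_det_transpose_mul_inv_mul {m n : Type*} [Fintype m] [Fintype n]
    [DecidableEq m] [DecidableEq n] {X : Matrix m n ℝ} {V : Matrix m m ℝ} (hV : V.PosDef)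
    (hX : Function.Injective X.mulVec) : IsUnit (Xᵀ * V⁻¹ * X).det := by
  have hG := hV.inv.conjTranspose_mul_mul_same hX
  rw [conjTranspose_eq_transpose_of_trivial] at hG
  exact hG.det_pos.ne'.isUnit

end Matrix

namespace ProbabilityTheory

variable {Ω ι : Type*} [MeasurableSpace Ω] {μ : Measure Ω}

lemma HasLaw.memLp_two_of_gaussianReal {Z : Ω → ℝ} {m : ℝ} {v : ℝ≥0}
    (hZ : HasLaw Z (gaussianReal m v) μ) : MemLp Z 2 μ := by
  have hid := memLp_id_gaussianReal (μ := m) (v := v) 2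
  rw [← hZ.map_eq] at hid
  exact (memLp_map_measure_iff aestronglyMeasurable_id hZ.aemeasurable).1 hid

lemma integral_sq_sum_mul_of_iIndepFun_gaussianReal [IsProbabilityMeasure μ] [Fintype ι]
    {Z : ι → Ω → ℝ} {σ : ι → ℝ≥0} (hind : iIndepFun Z μ)
    (hZ : ∀ s, HasLaw (Z s) (gaussianReal 0 (σ s)) μ) (w : ι → ℝ) :
    ∫ ω, (∑ s, w s * Z s ω) ^ 2 ∂μ = ∑ s, w s ^ 2 * σ s := by
  have hL2 s : MemLp (fun ω => w s * Z s ω) 2 μ :=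
    (hZ s).memLp_two_of_gaussianReal.const_mul _
  have hsum : (fun ω => ∑ s, w s * Z s ω) = ∑ s, fun ω => w s * Z s ω := by
    ext ω
    rw [Finset.sum_apply]
  have hmean : μ[fun ω => ∑ s, w s * Z s ω] = 0 := by
    rw [integral_finsetSum _ fun s _ => (hL2 s).integrable one_le_two]
    simp [integral_const_mul, (hZ _).integral_eq, integral_id_gaussianReal]
  rw [← variance_of_integral_eq_zero (by fun_prop) hmean, hsum,
    IndepFun.variance_sum (fun s _ => hL2 s) fun s _ t _ hst =>
      (hind.indepFun hst).comp (measurable_const_mul (w s)) (measurable_const_mul (w t))]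
  simp [variance_const_mul, (hZ _).variance_eq, variance_id_gaussianReal]

end ProbabilityTheory

lemma blup_sub_eq {R : Type*} [CommRing R] {m n : Type*} [Fintype m] [Fintype n]
    [DecidableEq m] [DecidableEq n] {X : Matrix m n R} {M : Matrix n m R} (hMX : M * X = 1)
    (β : n → R) (v e : m → R) (B : R) (i : m) :
    (1 - B) * (X *ᵥ β + v + e) i + B * (X i ⬝ᵥ (M *ᵥ (X *ᵥ β + v + e))) - (X *ᵥ β + v) i =
      (B • vecMul (X i) M - Pi.single i B) ⬝ᵥ v +
        (B • vecMul (X i) M + Pi.single i (1 - B)) ⬝ᵥ e := by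
  have hfit : vecMul (X i) M ⬝ᵥ (X *ᵥ β) = (X *ᵥ β) i := by
    rw [dotProduct_mulVec, vecMul_vecMul, hMX, vecMul_one]
    rfl
  rw [dotProduct_mulVec, dotProduct_add, dotProduct_add, hfit]
  simp only [Pi.add_apply, sub_dotProduct, add_dotProduct, smul_dotProduct, single_dotProduct,
    smul_eq_mul]
  ring

lemma sum_blup_weights_sq_mul {ι : Type*} [Fintype ι] [DecidableEq ι] {A B : ℝ} {D : ι → ℝ}
    {i : ι} (hB : B * (A + D i) = D i) (c : ι → ℝ) :
    ∑ j, (B • c - Pi.single i B : ι → ℝ) j ^ 2 * A +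
        ∑ j, (B • c + Pi.single i (1 - B) : ι → ℝ) j ^ 2 * D j =
      B * A + B ^ 2 * ∑ j, (A + D j) * c j ^ 2 := by
  have hterm j : (B • c - Pi.single i B : ι → ℝ) j ^ 2 * A +
        (B • c + Pi.single i (1 - B) : ι → ℝ) j ^ 2 * D j =
      B ^ 2 * ((A + D j) * c j ^ 2) + (Pi.single i (B * A) : ι → ℝ) j := by
    simp only [Pi.sub_apply, Pi.add_apply, Pi.smul_apply, smul_eq_mul]
    rcases eq_or_ne j i with rfl | hj
    · simp only [Pi.single_eq_same]
      linear_combination (B - 1 - 2 * B * c j) * hB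
    · simp only [Pi.single_eq_of_ne hj, sub_zero, add_zero]
      ring
  rw [← Finset.sum_add_distrib, Finset.sum_congr rfl fun j _ => hterm j, Finset.sum_add_distrib,
    ← Finset.mul_sum, Finset.sum_pi_single']
  simp only [Finset.mem_univ, if_true]
  ring

theorem stmt15_general {Ω : Type*} [MeasureSpace Ω] [IsProbabilityMeasure (ℙ : Measure Ω)]
    {m p : ℕ}
    (X : Matrix (Fin m) (Fin p) ℝ) (hX : X.rank = p)
    (β : Fin p → ℝ) (D : Fin m → ℝ) (hD : ∀ j, 0 < D j) (A : ℝ) (hA : 0 < A)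
    (v e : Ω → Fin m → ℝ) (hv : Measurable v) (he : Measurable e)
    (hind : iIndepFun
      (Sum.elim (fun j ω => v ω j) (fun j ω => e ω j) : Fin m ⊕ Fin m → Ω → ℝ) ℙ)
    (hvg : ∀ j, Measure.map (fun ω => v ω j) ℙ = gaussianReal 0 (Real.toNNReal A))
    (heg : ∀ j, Measure.map (fun ω => e ω j) ℙ = gaussianReal 0 (Real.toNNReal (D j)))
    (θ y : Ω → Fin m → ℝ)
    (hθ : ∀ ω j, θ ω j = (∑ k, X j k * β k) + v ω j)
    (hy : ∀ ω j, y ω j = θ ω j + e ω j)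
    (V : Matrix (Fin m) (Fin m) ℝ) (hV : V = Matrix.diagonal (fun j => A + D j))
    (βhat : Ω → Fin p → ℝ)
    (hβ : ∀ ω, βhat ω = ((Xᵀ * V⁻¹ * X)⁻¹ * Xᵀ * V⁻¹).mulVec (y ω))
    (i : Fin m) :
    (∫ ω, ((1 - D i / (A + D i)) * y ω i +
        (D i / (A + D i)) * (∑ k, X i k * βhat ω k) - θ ω i) ^ 2) =
      A * D i / (A + D i) +
        (D i / (A + D i)) ^ 2 *
          ((fun k => X i k) ⬝ᵥ ((Xᵀ * V⁻¹ * X)⁻¹).mulVec (fun k => X i k)) := by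
  subst hV
  have hAD j : 0 < A + D j := add_pos hA (hD j)
  have hV : (diagonal fun j => A + D j).PosDef := posDef_diagonal_iff.2 hAD
  have hG := isUnit_det_transpose_mul_inv_mul hV
    (mulVec_injective_of_rank_eq_card (by rw [hX, Fintype.card_fin]))
  set B := D i / (A + D i)
  set c := vecMul (X i) (glsMatrix X (diagonal fun j => A + D j))
  set Z : Fin m ⊕ Fin m → Ω → ℝ := Sum.elim (fun j ω => v ω j) (fun j ω => e ω j)
  have hlaw s : HasLaw (Z s)
      (gaussianReal 0 (Sum.elim (fun _ => A.toNNReal) (fun j => (D j).toNNReal) s)) := by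
    rcases s with j | j
    · exact ⟨((measurable_pi_apply j).comp hv).aemeasurable, hvg j⟩
    · exact ⟨((measurable_pi_apply j).comp he).aemeasurable, heg j⟩
  have herr ω : (1 - B) * y ω i + B * (∑ k, X i k * βhat ω k) - θ ω i =
      ∑ s, Sum.elim (B • c - Pi.single i B) (B • c + Pi.single i (1 - B)) s * Z s ω := by
    have hθω : θ ω = X *ᵥ β + v ω := funext (hθ ω)
    have hyω : y ω = X *ᵥ β + v ω + e ω := by
      rw [← hθω]
      exact funext (hy ω)
    rw [Fintype.sum_sum_type, hβ, hyω, hθω]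
    exact blup_sub_eq (glsMatrix_mul_self hG) β (v ω) (e ω) B i
  simp_rw [herr]
  rw [integral_sq_sum_mul_of_iIndepFun_gaussianReal hind hlaw, Fintype.sum_sum_type]
  simp only [Sum.elim_inl, Sum.elim_inr, Real.coe_toNNReal _ hA.le,
    Real.coe_toNNReal _ (hD _).le]
  rw [sum_blup_weights_sq_mul (div_mul_cancel₀ _ (hAD i).ne') c,
    ← dotProduct_diagonal_mulVec_self,
    vecMul_glsMatrix_dotProduct_mulVec (diagonal_transpose _) hV.det_pos.ne'.isUnit hG]
  ring

/-- Exact MSE of the BLUP in the Fay–Herriot model: for known `A > 0`, with mutually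
independent `v₁,…,vₘ, e₁,…,eₘ` where `vⱼ ~ N(0,A)`, `eⱼ ~ N(0,Dⱼ)`, `θⱼ = xⱼᵀβ + vⱼ`,
`yⱼ = θⱼ + eⱼ`, `V(A) = diag(A+D₁,…,A+Dₘ)`, `β̂(A) = (XᵀV⁻¹X)⁻¹XᵀV⁻¹y` and
`Bᵢ = Dᵢ/(A+Dᵢ)`, the BLUP `θ̂ᵢ = (1 − Bᵢ)·yᵢ + Bᵢ·xᵢᵀβ̂(A)` satisfies
`E[(θ̂ᵢ − θᵢ)²] = g₁ᵢ(A) + g₂ᵢ(A)` with `g₁ᵢ(A) = A·Dᵢ/(A+Dᵢ)` and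
`g₂ᵢ(A) = (Dᵢ/(A+Dᵢ))²·xᵢᵀ(XᵀV⁻¹X)⁻¹xᵢ`. -/
theorem stmt15 {Ω : Type*} [MeasureSpace Ω] [IsProbabilityMeasure (ℙ : Measure Ω)]
    {m p : ℕ} (hp : 0 < p) (hpm : p ≤ m)
    (X : Matrix (Fin m) (Fin p) ℝ) (hX : X.rank = p)
    (β : Fin p → ℝ) (D : Fin m → ℝ) (hD : ∀ j, 0 < D j) (A : ℝ) (hA : 0 < A)
    (v e : Ω → Fin m → ℝ) (hv : Measurable v) (he : Measurable e)
    (hind : iIndepFun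
      (Sum.elim (fun j ω => v ω j) (fun j ω => e ω j) : Fin m ⊕ Fin m → Ω → ℝ) ℙ)
    (hvg : ∀ j, Measure.map (fun ω => v ω j) ℙ = gaussianReal 0 (Real.toNNReal A))
    (heg : ∀ j, Measure.map (fun ω => e ω j) ℙ = gaussianReal 0 (Real.toNNReal (D j)))
    (θ y : Ω → Fin m → ℝ)
    (hθ : ∀ ω j, θ ω j = (∑ k, X j k * β k) + v ω j)
    (hy : ∀ ω j, y ω j = θ ω j + e ω j)
    (V : Matrix (Fin m) (Fin m) ℝ) (hV : V = Matrix.diagonal (fun j => A + D j))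
    (βhat : Ω → Fin p → ℝ)
    (hβ : ∀ ω, βhat ω = ((Xᵀ * V⁻¹ * X)⁻¹ * Xᵀ * V⁻¹).mulVec (y ω))
    (i : Fin m) :
    (∫ ω, ((1 - D i / (A + D i)) * y ω i +
        (D i / (A + D i)) * (∑ k, X i k * βhat ω k) - θ ω i) ^ 2) =
      A * D i / (A + D i) +
        (D i / (A + D i)) ^ 2 *
          ((fun k => X i k) ⬝ᵥ ((Xᵀ * V⁻¹ * X)⁻¹).mulVec (fun k => X i k)) :=
  stmt15_general X hX β D hD A hA v e hv he hind hvg heg θ y hθ hy V hV βhat hβ i
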